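/- arXiv:2006.00862 — 2 statements merged into one kernel-verified Lean document; each statement's English description precedes it below -/
import Mathlib

section
/- Define the Hecke-type operator T_{m,ℓ} = Σ_{ad = m} a^{ℓ-1} B_a U_d acting on Laurent series, and the classical Hecke operator of weight k by T_d = T_{d,k}. Then for arbitrary integers k and ℓ, T_{m,ℓ} = Σ_{ad = m} c_{k,ℓ}(a) B_a T_d, where c_{k,ℓ}(a) = Σ_{r | a} r^{ℓ-1} μ(a/r) (a/r)^{k-1} and μ is the Möbius function. -/
open scoped ArithmeticFunction

/-- `B_a` on formal Laurent series: `Σ aₙ qⁿ ↦ Σ aₙ q^{an}`. -/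
noncomputable def Bop (a : ℕ) (f : ℤ → ℂ) : ℤ → ℂ :=
  fun n => if (a : ℤ) ∣ n then f (n / a) else 0

/-- `U_d` on formal Laurent series: `Σ aₙ qⁿ ↦ Σ a_{dn} qⁿ`. -/
noncomputable def Uop (d : ℕ) (f : ℤ → ℂ) : ℤ → ℂ :=
  fun n => f (d * n)

/-- The Hecke-type operator `T_{m,ℓ} = Σ_{ad = m} a^{ℓ-1} B_a U_d` acting on
Laurent series. The classical Hecke operator of weight `k` is `T_d = T_{d,k}`. -/
noncomputable def Theck (m : ℕ) (ℓ : ℤ) (f : ℤ → ℂ) : ℤ → ℂ :=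
  fun n => ∑ p ∈ Nat.divisorsAntidiagonal m, (p.1 : ℂ) ^ (ℓ - 1) * Bop p.1 (Uop p.2 f) n

/-- `c_{k,ℓ}(a) = Σ_{r ∣ a} r^{ℓ-1} μ(a/r) (a/r)^{k-1}` where `μ` is the
Möbius function. -/
noncomputable def cHecke (k ℓ : ℤ) (a : ℕ) : ℂ :=
  ∑ r ∈ a.divisors, (r : ℂ) ^ (ℓ - 1) * (ArithmeticFunction.moebius (a / r) : ℂ) * ((a / r : ℕ) : ℂ) ^ (k - 1)

/-! Since `B_a B_b = B_{ab}`, the right-hand side expands to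
`Σ_{Ae = m} (c_{k,ℓ} ⋆ Id_{k-1})(A) B_A U_e`. By associativity of Dirichlet convolution,
`c_{k,ℓ} ⋆ Id_{k-1} = Id_{ℓ-1} ⋆ ((μ · Id_{k-1}) ⋆ Id_{k-1})`, and `μ · Id_s` is the Dirichlet
inverse of `Id_s` because `Id_s` is completely multiplicative; so the coefficient is `A^{ℓ-1}`,
which gives the left-hand side. -/

open ArithmeticFunction Finset
open scoped ArithmeticFunction.Moebius ArithmeticFunction.zeta

namespace Nat

theorem sum_divisorsAntidiagonal_sum_divisorsAntidiagonal {M : Type*} [AddCommMonoid M]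
    (m : ℕ) (F : ℕ → ℕ → ℕ → M) :
    ∑ p ∈ m.divisorsAntidiagonal, ∑ q ∈ p.2.divisorsAntidiagonal, F p.1 q.1 q.2 =
      ∑ p ∈ m.divisorsAntidiagonal, ∑ q ∈ p.1.divisorsAntidiagonal, F q.1 q.2 p.2 := by
  rw [sum_sigma', sum_sigma']
  apply sum_nbij' (fun ⟨⟨a, _⟩, ⟨b, e⟩⟩ ↦ ⟨(a * b, e), (a, b)⟩)
    (fun ⟨⟨_, e⟩, ⟨a, b⟩⟩ ↦ ⟨(a, b * e), (b, e)⟩) <;>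
  aesop (add simp mul_assoc)

end Nat

namespace ArithmeticFunction

theorem coe_moebius_pmul_mul_self {R : Type*} [CommRing R] (f : ArithmeticFunction R)
    (h1 : f 1 = 1) (hmul : ∀ a b, f (a * b) = f a * f b) :
    (μ : ArithmeticFunction R).pmul f * f = 1 := by
  ext t
  have hμζ := congrArg (· t) (coe_moebius_mul_coe_zeta (R := R))
  simp only [mul_apply, pmul_apply] at hμζ ⊢
  calc ∑ x ∈ t.divisorsAntidiagonal, (μ : ArithmeticFunction R) x.1 * f x.1 * f x.2
      = (∑ x ∈ t.divisorsAntidiagonal,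
          (μ : ArithmeticFunction R) x.1 * (ζ : ArithmeticFunction R) x.2) * f t := by
        rw [sum_mul]
        refine sum_congr rfl fun x hx => ?_
        rw [natCoe_apply, zeta_apply, if_neg (Nat.right_ne_zero_of_mem_divisorsAntidiagonal hx),
          ← (Nat.mem_divisorsAntidiagonal.1 hx).1, hmul]
        push_cast
        ring
    _ = (1 : ArithmeticFunction R) t := by
        rw [hμζ, one_apply]
        split_ifs with ht <;> simp [ht, h1]

/-- `Id_s`; the value at `0` is forced to be `0`, not `0 ^ s`. -/
noncomputable def zpow (s : ℤ) : ArithmeticFunction ℂ :=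
  ⟨fun n => if n = 0 then 0 else (n : ℂ) ^ s, if_pos rfl⟩

theorem zpow_apply {s : ℤ} {n : ℕ} (hn : n ≠ 0) : zpow s n = (n : ℂ) ^ s :=
  if_neg hn

theorem coe_moebius_pmul_zpow_mul_zpow (s : ℤ) :
    (μ : ArithmeticFunction ℂ).pmul (zpow s) * zpow s = 1 := by
  refine coe_moebius_pmul_mul_self _ (by simp [zpow_apply]) fun a b => ?_
  rcases eq_or_ne a 0 with rfl | ha
  · simp [zpow]
  rcases eq_or_ne b 0 with rfl | hb
  · simp [zpow]
  simp [zpow_apply, ha, hb, mul_zpow]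

end ArithmeticFunction

theorem cHecke_eq_zpow_mul (k ℓ : ℤ) (a : ℕ) :
    cHecke k ℓ a = (zpow (ℓ - 1) * (μ : ArithmeticFunction ℂ).pmul (zpow (k - 1))) a := by
  rw [cHecke, mul_apply, ← Nat.sum_divisorsAntidiagonal
    (fun r s => (r : ℂ) ^ (ℓ - 1) * (μ s : ℂ) * (s : ℂ) ^ (k - 1))]
  refine sum_congr rfl fun x hx => ?_
  rw [pmul_apply, intCoe_apply, zpow_apply (Nat.left_ne_zero_of_mem_divisorsAntidiagonal hx),
    zpow_apply (Nat.right_ne_zero_of_mem_divisorsAntidiagonal hx), mul_assoc]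

theorem sum_cHecke_mul_zpow (k ℓ : ℤ) {a : ℕ} (ha : a ≠ 0) :
    ∑ p ∈ a.divisorsAntidiagonal, cHecke k ℓ p.1 * (p.2 : ℂ) ^ (k - 1) =
      (a : ℂ) ^ (ℓ - 1) := by
  have h := congrArg (· a) <| show
      zpow (ℓ - 1) * (μ : ArithmeticFunction ℂ).pmul (zpow (k - 1)) * zpow (k - 1) =
        zpow (ℓ - 1) by
    rw [mul_assoc, coe_moebius_pmul_zpow_mul_zpow, mul_one]
  simp only [mul_apply (f := _ * _), ← cHecke_eq_zpow_mul, zpow_apply ha] at h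
  rw [← h]
  refine sum_congr rfl fun p hp => ?_
  rw [zpow_apply (Nat.right_ne_zero_of_mem_divisorsAntidiagonal hp)]

theorem Bop_sum_mul {ι : Type*} (a : ℕ) (s : Finset ι) (c : ι → ℂ) (g : ι → ℤ → ℂ)
    (n : ℤ) :
    Bop a (fun x => ∑ i ∈ s, c i * g i x) n = ∑ i ∈ s, c i * Bop a (g i) n := by
  unfold Bop
  split_ifs <;> simp

theorem Bop_Bop {a : ℕ} (ha : a ≠ 0) (b : ℕ) (g : ℤ → ℂ) (n : ℤ) :
    Bop a (Bop b g) n = Bop (a * b) g n := by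
  have ha' : (a : ℤ) ≠ 0 := by exact_mod_cast ha
  simp only [Bop, Nat.cast_mul]
  by_cases hn : (a : ℤ) ∣ n
  · obtain ⟨t, rfl⟩ := hn
    simp only [dvd_mul_right, if_true, Int.mul_ediv_cancel_left _ ha', mul_dvd_mul_iff_left ha',
      Int.mul_ediv_mul_of_pos _ _ (by omega : (0 : ℤ) < a)]
  · rw [if_neg hn, if_neg fun h => hn (dvd_trans (dvd_mul_right _ _) h)]

theorem sum_mul_Bop_sum_mul_Bop (u w : ℕ → ℂ) (g : ℕ → ℤ → ℂ) (m : ℕ) (n : ℤ) :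
    ∑ p ∈ m.divisorsAntidiagonal,
        u p.1 * Bop p.1 (fun x => ∑ q ∈ p.2.divisorsAntidiagonal, w q.1 * Bop q.1 (g q.2) x) n =
      ∑ p ∈ m.divisorsAntidiagonal,
        (∑ q ∈ p.1.divisorsAntidiagonal, u q.1 * w q.2) * Bop p.1 (g p.2) n := by
  calc _ = ∑ p ∈ m.divisorsAntidiagonal, ∑ q ∈ p.2.divisorsAntidiagonal,
          u p.1 * w q.1 * Bop (p.1 * q.1) (g q.2) n := by
        refine sum_congr rfl fun p hp => ?_
        rw [Bop_sum_mul, mul_sum]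
        refine sum_congr rfl fun q _ => ?_
        rw [Bop_Bop (Nat.left_ne_zero_of_mem_divisorsAntidiagonal hp), mul_assoc]
    _ = ∑ p ∈ m.divisorsAntidiagonal, ∑ q ∈ p.1.divisorsAntidiagonal,
          u q.1 * w q.2 * Bop (q.1 * q.2) (g p.2) n :=
        Nat.sum_divisorsAntidiagonal_sum_divisorsAntidiagonal m
          fun a b e => u a * w b * Bop (a * b) (g e) n
    _ = _ := by
        refine sum_congr rfl fun p _ => ?_
        rw [sum_mul]
        refine sum_congr rfl fun q hq => ?_
        rw [(Nat.mem_divisorsAntidiagonal.1 hq).1]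

theorem Top_eq_sum_cHecke_general (m : ℕ) (k ℓ : ℤ) (f : ℤ → ℂ) :
    Theck m ℓ f =
      fun n => ∑ p ∈ Nat.divisorsAntidiagonal m,
        cHecke k ℓ p.1 * Bop p.1 (Theck p.2 k f) n := by
  funext n
  calc Theck m ℓ f n
      = ∑ p ∈ m.divisorsAntidiagonal,
          (∑ q ∈ p.1.divisorsAntidiagonal, cHecke k ℓ q.1 * (q.2 : ℂ) ^ (k - 1)) *
            Bop p.1 (Uop p.2 f) n :=
        sum_congr rfl fun p hp => by
          rw [sum_cHecke_mul_zpow k ℓ (Nat.left_ne_zero_of_mem_divisorsAntidiagonal hp)]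
    _ = _ := (sum_mul_Bop_sum_mul_Bop _ (fun b => (b : ℂ) ^ (k - 1)) (Uop · f) m n).symm

/-- For arbitrary integers `k` and `ℓ`,
`T_{m,ℓ} = Σ_{ad = m} c_{k,ℓ}(a) B_a T_d`, where `T_d = T_{d,k}` is the classical
Hecke operator of weight `k`. -/
theorem Top_eq_sum_cHecke (m : ℕ) (hm : 0 < m) (k ℓ : ℤ) (f : ℤ → ℂ) :
    Theck m ℓ f =
      fun n => ∑ p ∈ Nat.divisorsAntidiagonal m,
        cHecke k ℓ p.1 * Bop p.1 (Theck p.2 k f) n :=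
  Top_eq_sum_cHecke_general m k ℓ f
end

section
/- For a quasimodular form f of weight k written as a polynomial in the Eisenstein series E_2 with modular coefficients, the commutator of formal differentiation d/dC_2 (where C_2 = -E_2/24) with D_q = q d/dq acting on f equals multiplication by -2k: (d/dC_2)(D_q f) - D_q((d/dC_2) f) = -2k f. -/
open MvPolynomial

/-- The algebra of quasimodular forms for `SL₂(ℤ)`, `QMod = ℂ[C₂, C₄, C₆]`,
modelled as polynomials in three variables `X 0 = C₂`, `X 1 = C₄`, `X 2 = C₆`. -/
abbrev QMod := MvPolynomial (Fin 3) ℂ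

/-- The weight-2 derivation `D_q = q d/dq` on `QMod = ℂ[C₂, C₄, C₆]`, given by the
Ramanujan identities in the renormalized Eisenstein variables
`C₂ = -E₂/24`, `C₄ = E₄/2880`, `C₆ = -E₆/181440`:
`D_q C₂ = -2C₂² + 10C₄`, `D_q C₄ = -8C₂C₄ + 21C₆`,
`D_q C₆ = -12C₂C₆ + (160/7)C₄²`. -/
noncomputable def Dq : Derivation ℂ QMod QMod :=
  mkDerivation ℂ
    ![-2 * X 0 ^ 2 + 10 * X 1,
      -8 * X 0 * X 1 + 21 * X 2,
      -12 * X 0 * X 2 + C (160 / 7) * X 1 ^ 2]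

/-- The weighted Euler derivation `X i ↦ w i • X i`. -/
noncomputable def eulerD (w : Fin 3 → ℕ) : Derivation ℂ QMod QMod :=
  mkDerivation ℂ (fun i => (w i : ℂ) • X i)

lemma eulerD_monomial (w : Fin 3 → ℕ) (d : Fin 3 →₀ ℕ) (r : ℂ) :
    eulerD w (monomial d r) = ((Finsupp.weight w d : ℕ) : ℂ) • monomial d r := by
  classical
  rw [eulerD, mkDerivation_monomial, Finsupp.sum, Finsupp.weight_apply, Finsupp.sum]
  push_cast [smul_eq_mul]
  rw [Finset.sum_smul, Finset.smul_sum]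
  refine Finset.sum_congr rfl fun i hi => ?_
  have hle : Finsupp.single i 1 ≤ d := by
    rw [Finsupp.single_le_iff]
    exact Nat.one_le_iff_ne_zero.2 (Finsupp.mem_support_iff.1 hi)
  have key : (monomial (d - Finsupp.single i 1) ((d i : ℂ))) * X i = (d i : ℂ) • monomial d 1 := by
    rw [X, monomial_mul, tsub_add_cancel_of_le hle, mul_one, smul_monomial, smul_eq_mul, mul_one]
  calc r • ((monomial (d - Finsupp.single i 1)) (d i : ℂ) • (w i : ℂ) • X i)
      = ((w i : ℂ)) • r • ((monomial (d - Finsupp.single i 1)) (d i : ℂ) * X i) := by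
        rw [smul_eq_mul (α := QMod), mul_smul_comm, smul_comm r]
    _ = ((d i : ℂ) * (w i : ℂ)) • monomial d r := by
        rw [key, smul_comm r, smul_smul, smul_monomial, smul_eq_mul, mul_one, mul_comm]

/-- Weighted Euler identity. -/
lemma eulerD_eq_of_homog (w : Fin 3 → ℕ) {f : QMod} {k : ℕ}
    (hf : f.IsWeightedHomogeneous w k) : eulerD w f = (k : ℂ) • f := by
  conv_lhs => rw [f.as_sum, map_sum]
  conv_rhs => rw [f.as_sum, Finset.smul_sum]
  refine Finset.sum_congr rfl fun d hd => ?_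
  rw [eulerD_monomial, hf (mem_support_iff.1 hd)]

lemma p0 : pderiv (0 : Fin 3) ((-2 * X 0 ^ 2 + 10 * X 1 : QMod)) = -4 * X 0 := by
  rw [show (-2 * X 0 ^ 2 + 10 * X 1 : QMod) = C (-2) * X 0 ^ 2 + C 10 * X 1 by
    rw [map_neg, map_ofNat, map_ofNat]]
  rw [map_add, pderiv_C_mul, pderiv_C_mul, pderiv_pow, pderiv_X_self,
    pderiv_X_of_ne (by decide), map_neg, map_ofNat, map_ofNat]
  ring

lemma p1 : pderiv (0 : Fin 3) ((-8 * X 0 * X 1 + 21 * X 2 : QMod)) = -8 * X 1 := by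
  rw [show (-8 * X 0 * X 1 + 21 * X 2 : QMod) = C (-8) * (X 0 * X 1) + C 21 * X 2 by
    rw [map_neg, map_ofNat, map_ofNat]; ring]
  rw [map_add, pderiv_C_mul, pderiv_C_mul, pderiv_mul, pderiv_X_self,
    pderiv_X_of_ne (by decide), pderiv_X_of_ne (by decide), map_neg, map_ofNat, map_ofNat]
  ring

lemma p2 : pderiv (0 : Fin 3) ((-12 * X 0 * X 2 + C (160 / 7) * X 1 ^ 2 : QMod))
    = -12 * X 2 := by
  rw [show (-12 * X 0 * X 2 + C (160 / 7) * X 1 ^ 2 : QMod)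
      = C (-12) * (X 0 * X 2) + C (160 / 7) * X 1 ^ 2 by
    rw [map_neg, map_ofNat]; ring]
  rw [map_add, pderiv_C_mul, pderiv_C_mul, pderiv_mul, pderiv_X_self,
    pderiv_X_of_ne (by decide), pderiv_pow, pderiv_X_of_ne (by decide),
    map_neg, map_ofNat]
  ring

lemma dq0 : Dq (X 0) = -2 * X 0 ^ 2 + 10 * X 1 := by rw [Dq, mkDerivation_X]; rfl
lemma dq1 : Dq (X 1) = -8 * X 0 * X 1 + 21 * X 2 := by rw [Dq, mkDerivation_X]; rfl
lemma dq2 : Dq (X 2) = -12 * X 0 * X 2 + C (160 / 7) * X 1 ^ 2 := by rw [Dq, mkDerivation_X]; rfl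

lemma bracket_eq :
    ⁅(pderiv 0 : Derivation ℂ QMod QMod), Dq⁆ = (-2 : ℂ) • eulerD ![2, 4, 6] := by
  apply derivation_ext
  intro i
  rw [Derivation.commutator_apply, Derivation.coe_smul, Pi.smul_apply, eulerD, mkDerivation_X]
  fin_cases i
  · rw [show ((⟨0, by omega⟩ : Fin 3)) = 0 from rfl, dq0, p0, pderiv_X_self,
      Derivation.map_one_eq_zero, sub_zero,
      show (![2,4,6] : Fin 3 → ℕ) 0 = 2 from rfl, smul_smul, smul_eq_C_mul,
      show ((-2 : ℂ) * (2 : ℕ)) = -4 by norm_num, map_neg, map_ofNat]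
  · rw [show ((⟨1, by omega⟩ : Fin 3)) = 1 from rfl, dq1, p1,
      pderiv_X_of_ne (by decide), map_zero, sub_zero,
      show (![2,4,6] : Fin 3 → ℕ) 1 = 4 from rfl, smul_smul, smul_eq_C_mul,
      show ((-2 : ℂ) * (4 : ℕ)) = -8 by norm_num, map_neg, map_ofNat]
  · rw [show ((⟨2, by omega⟩ : Fin 3)) = 2 from rfl, dq2, p2,
      pderiv_X_of_ne (by decide), map_zero, sub_zero,
      show (![2,4,6] : Fin 3 → ℕ) 2 = 6 from rfl, smul_smul, smul_eq_C_mul,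
      show ((-2 : ℂ) * (6 : ℕ)) = -12 by norm_num, map_neg, map_ofNat]

/-- For a quasimodular form `f` of weight `k` (written as a polynomial in the
Eisenstein series with modular coefficients, i.e. a weighted-homogeneous element of
`ℂ[C₂, C₄, C₆]` with weights `2, 4, 6`), the commutator of formal differentiation
`d/dC₂` with `D_q` acting on `f` equals multiplication by `-2k`. -/
theorem commutator_dC2_Dq (k : ℕ) (f : QMod)
    (hf : f.IsWeightedHomogeneous ![2, 4, 6] k) :
    pderiv 0 (Dq f) - Dq (pderiv 0 f) = (-(2 * (k : ℂ))) • f := by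
  have h := congrArg (fun D : Derivation ℂ QMod QMod => D f) bracket_eq
  simp only [Derivation.commutator_apply, Derivation.coe_smul, Pi.smul_apply] at h
  rw [h, eulerD_eq_of_homog _ hf, smul_smul]
  norm_num
end
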